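/- Let R be a G-graded ring with unity and P a proper graded ideal of R. Suppose that for all graded left ideals A, B, C of R with 0 ≠ ABC ⊆ P, one has AB ⊆ P or BC ⊆ P or AC ⊆ P. Then P is a graded weakly 2-absorbing ideal of R. -/
import Mathlib

variable {G R : Type*} [AddGroup G] [DecidableEq G] [Ring R]

/-- `x` is a homogeneous element of the `G`-graded ring `R`. -/
def IsHomog (𝒜 : G → AddSubgroup R) (x : R) : Prop := ∃ g, x ∈ 𝒜 g

/-- A two-sided ideal is graded if it contains all homogeneous components of its elements. -/
def IsGradedIdeal (𝒜 : G → AddSubgroup R) [GradedRing 𝒜] (P : TwoSidedIdeal R) : Prop :=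
  ∀ a ∈ P, ∀ g : G, (DirectSum.decompose 𝒜 a g : R) ∈ P

/-- Graded weakly prime: a proper graded ideal `P` such that `0 ≠ IJ ⊆ P` for graded
ideals `I, J` implies `I ⊆ P` or `J ⊆ P`. -/
def IsGradedWeaklyPrime (𝒜 : G → AddSubgroup R) [GradedRing 𝒜] (P : TwoSidedIdeal R) : Prop :=
  P ≠ ⊤ ∧ IsGradedIdeal 𝒜 P ∧
    ∀ I J : TwoSidedIdeal R, IsGradedIdeal 𝒜 I → IsGradedIdeal 𝒜 J →
      (∃ a ∈ I, ∃ b ∈ J, a * b ≠ 0) → (∀ a ∈ I, ∀ b ∈ J, a * b ∈ P) →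
      I ≤ P ∨ J ≤ P

/-- Graded weakly 2-absorbing: a proper graded ideal `P` such that for homogeneous `x, y, z`,
`0 ≠ xRyRz ⊆ P` implies `xy ∈ P` or `yz ∈ P` or `xz ∈ P`. -/
def IsGradedWeakly2Absorbing (𝒜 : G → AddSubgroup R) [GradedRing 𝒜] (P : TwoSidedIdeal R) : Prop :=
  P ≠ ⊤ ∧ IsGradedIdeal 𝒜 P ∧
    ∀ x y z : R, IsHomog 𝒜 x → IsHomog 𝒜 y → IsHomog 𝒜 z →
      (∃ r s : R, x * r * y * s * z ≠ 0) → (∀ r s : R, x * r * y * s * z ∈ P) →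
      x * y ∈ P ∨ y * z ∈ P ∨ x * z ∈ P

/-- A left ideal (a `Submodule R R`) is graded if it contains all homogeneous components
of its elements. -/
def IsGradedLeftIdeal' (𝒜 : G → AddSubgroup R) [GradedRing 𝒜] (I : Ideal R) : Prop :=
  ∀ a ∈ I, ∀ g : G, (DirectSum.decompose 𝒜 a g : R) ∈ I

/-- The left ideal generated by a homogeneous element is graded. -/
lemma span_singleton_graded (𝒜 : G → AddSubgroup R) [GradedRing 𝒜] {x : R} {gx : G}
    (hx : x ∈ 𝒜 gx) : IsGradedLeftIdeal' 𝒜 (Ideal.span {x}) := by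
  intro a ha g
  rw [Ideal.mem_span_singleton'] at ha
  obtain ⟨r, rfl⟩ := ha
  have hg : (g - gx) + gx = g := sub_add_cancel g gx
  have := DirectSum.coe_decompose_mul_add_of_right_mem 𝒜 (i := g - gx) hx (a := r)
  rw [hg] at this
  rw [this]
  exact Ideal.mem_span_singleton'.mpr ⟨_, rfl⟩

/-- If for all graded left ideals `A, B, C` with `0 ≠ ABC ⊆ P` we have `AB ⊆ P` or
`BC ⊆ P` or `AC ⊆ P`, then the proper graded ideal `P` is graded weakly 2-absorbing. -/
theorem stmt4 (𝒜 : G → AddSubgroup R) [GradedRing 𝒜] (P : TwoSidedIdeal R)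
    (hProper : P ≠ ⊤) (hGraded : IsGradedIdeal 𝒜 P)
    (h : ∀ A B C : Ideal R, IsGradedLeftIdeal' 𝒜 A → IsGradedLeftIdeal' 𝒜 B →
      IsGradedLeftIdeal' 𝒜 C →
      (∃ a ∈ A, ∃ b ∈ B, ∃ c ∈ C, a * b * c ≠ 0) →
      (∀ a ∈ A, ∀ b ∈ B, ∀ c ∈ C, a * b * c ∈ P) →
      (∀ a ∈ A, ∀ b ∈ B, a * b ∈ P) ∨ (∀ b ∈ B, ∀ c ∈ C, b * c ∈ P) ∨
        (∀ a ∈ A, ∀ c ∈ C, a * c ∈ P)) :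
    IsGradedWeakly2Absorbing 𝒜 P := by
  refine ⟨hProper, hGraded, ?_⟩
  rintro x y z ⟨gx, hx⟩ ⟨gy, hy⟩ ⟨gz, hz⟩ ⟨r, s, hne⟩ hsub
  have hxm : x ∈ Ideal.span {x} := Ideal.mem_span_singleton_self x
  have hym : y ∈ Ideal.span {y} := Ideal.mem_span_singleton_self y
  have hzm : z ∈ Ideal.span {z} := Ideal.mem_span_singleton_self z
  have key : ∀ a ∈ Ideal.span {x}, ∀ b ∈ Ideal.span {y}, ∀ c ∈ Ideal.span {z},
      a * b * c ∈ P := by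
    intro a ha b hb c hc
    rw [Ideal.mem_span_singleton'] at ha hb hc
    obtain ⟨r₁, rfl⟩ := ha; obtain ⟨r₂, rfl⟩ := hb; obtain ⟨r₃, rfl⟩ := hc
    have h1 : r₁ * x * (r₂ * y) * (r₃ * z) = r₁ * (x * r₂ * y * r₃ * z) := by simp only [mul_assoc]
    rw [h1]
    exact P.mul_mem_left _ _ (hsub r₂ r₃)
  have hne' : ∃ a ∈ Ideal.span {x}, ∃ b ∈ Ideal.span {y}, ∃ c ∈ Ideal.span {z},
      a * b * c ≠ 0 := by
    refine ⟨x, hxm, r * y, Ideal.mem_span_singleton'.mpr ⟨r, rfl⟩,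
      s * z, Ideal.mem_span_singleton'.mpr ⟨s, rfl⟩, ?_⟩
    intro h0; apply hne
    calc x * r * y * s * z = x * (r * y) * (s * z) := by simp only [mul_assoc]
    _ = 0 := h0
  rcases h _ _ _ (span_singleton_graded 𝒜 hx) (span_singleton_graded 𝒜 hy)
      (span_singleton_graded 𝒜 hz) hne' key with h1 | h1 | h1
  · exact Or.inl (h1 x hxm y hym)
  · exact Or.inr (Or.inl (h1 y hym z hzm))
  · exact Or.inr (Or.inr (h1 x hxm z hzm))
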